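/- Let W be a nonempty countable subset of the positive reals and L a finite set of labels with |L| ≥ 2. Model a string of the general run-length set ⟨W,L⟩ as a nonempty finite sequence of runs, i.e., pairs (ν, l) ∈ W × L, in which any two consecutive runs carry distinct labels; the weight of a string is the sum of its run-lengths. For every real s, the family (exp(−w(a)·s))_{a∈⟨W,L⟩} is summable if and only if (|L|−1)·G_W(s) < 1, where G_W(s) = Σ_{ν∈W} exp(−ν·s) ∈ [0,∞]. -/

import Mathlib

open scoped ENNReal

/-- A string of the general run-length set `⟨W,L⟩`: a nonempty finite sequence of runs
`(ν, l) ∈ W × L` in which any two consecutive runs carry distinct labels. -/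
def IsRLString {L : Type*} (W : Set ℝ) (a : List (ℝ × L)) : Prop :=
  a ≠ [] ∧ (∀ r ∈ a, r.1 ∈ W) ∧ a.Chain' fun p q => p.2 ≠ q.2

/-- The weight of a string: the sum of its run-lengths. -/
def rlWeight {L : Type*} (a : List (ℝ × L)) : ℝ :=
  (a.map Prod.fst).sum

/-- `G_W(s) = ∑_{ν ∈ W} exp(-ν·s)`, valued in `[0,∞]`. -/
noncomputable def GW (W : Set ℝ) (s : ℝ) : ℝ≥0∞ :=
  ∑' ν : W, ENNReal.ofReal (Real.exp (-(ν : ℝ) * s))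


/-!
Sort the strings by their number of runs. A string with `n + 1` runs is a first run `(ν, l)`
followed by `n` runs, each with a length in `W` and a label different from the label before it,
so in `[0, ∞]` the strings with `n + 1` runs contribute `|L| G ((|L| - 1) G)ⁿ`, where `G = G_W(s)`.
The geometric series sums to `|L| G / (1 - (|L| - 1) G)`, which is finite exactly when
`(|L| - 1) G < 1`: when `|L| ≥ 2` this bound also forces `G < ∞`.
-/

lemma summable_iff_tsum_ofReal_ne_top {α : Type*} {f : α → ℝ} (hf : ∀ i, 0 ≤ f i) :
    Summable f ↔ ∑' i, ENNReal.ofReal (f i) ≠ ∞ :=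
  ⟨Summable.tsum_ofReal_ne_top, fun h => by
    simpa [ENNReal.toReal_ofReal (hf _)] using ENNReal.summable_toReal h⟩

open Classical in
lemma ENNReal.tsum_prod_ite_mem_and_mem {α β : Type*} (A : Set α) (S : Finset β) (f : α → ℝ≥0∞) :
    ∑' p : α × β, (if p.1 ∈ A ∧ p.2 ∈ S then f p.1 else 0) = S.card * ∑' x : A, f x := by
  rw [ENNReal.tsum_prod', tsum_subtype, ← ENNReal.tsum_mul_left]
  refine tsum_congr fun x => ?_
  by_cases hx : x ∈ A
  · rw [tsum_eq_sum (s := S) fun b hb => by simp [hb]]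
    simp [hx, Finset.sum_ite_mem]
  · simp [hx]

namespace RunLength

variable {L : Type*}

noncomputable def expWeight (s : ℝ) (a : List (ℝ × L)) : ℝ≥0∞ :=
  ENNReal.ofReal (Real.exp (-rlWeight a * s))

lemma expWeight_nil (s : ℝ) : expWeight s ([] : List (ℝ × L)) = 1 := by
  simp [expWeight, rlWeight]

lemma expWeight_cons (s : ℝ) (r : ℝ × L) (a : List (ℝ × L)) :
    expWeight s (r :: a) = ENNReal.ofReal (Real.exp (-r.1 * s)) * expWeight s a := by
  rw [expWeight, expWeight, ← ENNReal.ofReal_mul (Real.exp_nonneg _), ← Real.exp_add]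
  simp only [rlWeight, List.map_cons, List.sum_cons]
  ring_nf

variable {W : Set ℝ}

lemma isRLString_iff {a : List (ℝ × L)} :
    IsRLString W a ↔ a ≠ [] ∧ (∀ r ∈ a, r.1 ∈ W) ∧ a.IsChain fun p q => p.2 ≠ q.2 :=
  Iff.rfl

lemma _root_.IsRLString.ne_nil {a : List (ℝ × L)} (ha : IsRLString W a) : a ≠ [] := ha.1

lemma isRLString_singleton {r : ℝ × L} : IsRLString W [r] ↔ r.1 ∈ W := by
  simp [isRLString_iff]

lemma isRLString_cons {r : ℝ × L} {a : List (ℝ × L)} (ha : a ≠ []) :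
    IsRLString W (r :: a) ↔ IsRLString W a ∧ r.1 ∈ W ∧ r.2 ≠ (a.head ha).2 := by
  simp [isRLString_iff, List.isChain_cons, ha, List.head?_eq_some_head ha]
  tauto

variable (L) in
open Classical in
noncomputable def lengthSum (W : Set ℝ) (s : ℝ) (n : ℕ) : ℝ≥0∞ :=
  ∑' a : List (ℝ × L), if IsRLString W a ∧ a.length = n then expWeight s a else 0

lemma tsum_expWeight_eq_tsum_lengthSum (s : ℝ) :
    ∑' a : {a : List (ℝ × L) // IsRLString W a}, expWeight s a.1 = ∑' n, lengthSum L W s n := by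
  classical
  simp only [lengthSum]
  rw [ENNReal.tsum_comm]
  refine (tsum_subtype {a | IsRLString W a} (expWeight s)).trans (tsum_congr fun a => ?_)
  by_cases ha : IsRLString W a
  · simp [ha, eq_comm (a := a.length)]
  · simp [ha]

lemma lengthSum_zero (s : ℝ) : lengthSum L W s 0 = 0 :=
  ENNReal.tsum_eq_zero.2 fun _ => if_neg fun h => h.1.ne_nil (List.length_eq_zero_iff.1 h.2)

variable [Fintype L]

lemma lengthSum_one (s : ℝ) : lengthSum L W s 1 = Fintype.card L * GW W s := by
  classical
  have hsupp : (Function.support fun a : List (ℝ × L) =>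
      if IsRLString W a ∧ a.length = 1 then expWeight s a else 0) ⊆ Set.range fun r => [r] :=
    fun a ha => (List.length_eq_one_iff.1 (by by_contra h; simp [h] at ha)).imp fun _ => Eq.symm
  rw [lengthSum, ← List.singleton_injective.tsum_eq hsupp]
  simpa [isRLString_singleton, expWeight_cons, expWeight_nil, GW] using
    ENNReal.tsum_prod_ite_mem_and_mem W (Finset.univ : Finset L)
      fun ν => ENNReal.ofReal (Real.exp (-ν * s))

open Classical in
lemma tsum_ite_isRLString_cons (s : ℝ) {a : List (ℝ × L)} (ha : IsRLString W a) :
    ∑' r : ℝ × L, (if IsRLString W (r :: a) then ENNReal.ofReal (Real.exp (-r.1 * s)) else 0) =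
      (Fintype.card L - 1) * GW W s := by
  have hcard : (Finset.univ.erase (a.head ha.ne_nil).2).card = Fintype.card L - 1 := by
    rw [Finset.card_erase_of_mem (Finset.mem_univ _), Finset.card_univ]
  simpa [isRLString_cons ha.ne_nil, ha, hcard, ENNReal.natCast_sub, and_comm, GW] using
    ENNReal.tsum_prod_ite_mem_and_mem W (Finset.univ.erase (a.head ha.ne_nil).2)
      fun ν => ENNReal.ofReal (Real.exp (-ν * s))

lemma lengthSum_add_two (s : ℝ) (n : ℕ) :
    lengthSum L W s (n + 2) = (Fintype.card L - 1) * GW W s * lengthSum L W s (n + 1) := by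
  classical
  have hinj : Function.Injective fun p : (ℝ × L) × List (ℝ × L) => p.1 :: p.2 :=
    fun _ _ h => Prod.ext_iff.2 (List.cons_eq_cons.1 h)
  have hsupp : (Function.support fun a : List (ℝ × L) =>
      if IsRLString W a ∧ a.length = n + 2 then expWeight s a else 0) ⊆
        Set.range fun p : (ℝ × L) × List (ℝ × L) => p.1 :: p.2 := by
    rintro (_ | ⟨r, a⟩) ha
    · simp at ha
    · exact ⟨(r, a), rfl⟩
  have hcons : ∀ a : List (ℝ × L),
      (∑' r : ℝ × L, if IsRLString W (r :: a) ∧ (r :: a).length = n + 2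
        then expWeight s (r :: a) else 0) =
      (Fintype.card L - 1) * GW W s *
        (if IsRLString W a ∧ a.length = n + 1 then expWeight s a else 0) := by
    intro a
    by_cases ha : IsRLString W a ∧ a.length = n + 1
    · simp only [ha, List.length_cons, and_true, if_true, expWeight_cons]
      rw [← tsum_ite_isRLString_cons s ha.1, ← ENNReal.tsum_mul_right]
      exact tsum_congr fun r => by split_ifs <;> simp
    · refine (ENNReal.tsum_eq_zero.2 fun r => if_neg ?_).trans (by simp [ha])
      rintro ⟨hra, hlen⟩
      have hne : a ≠ [] := by rintro rfl; simp at hlen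
      exact ha ⟨((isRLString_cons hne).1 hra).1, by simpa using hlen⟩
  simp only [lengthSum]
  rw [← hinj.tsum_eq hsupp, ENNReal.tsum_prod', ENNReal.tsum_comm]
  simp only [hcons, ENNReal.tsum_mul_left]

lemma lengthSum_succ (s : ℝ) (n : ℕ) :
    lengthSum L W s (n + 1) =
      Fintype.card L * GW W s * ((Fintype.card L - 1) * GW W s) ^ n := by
  induction n with
  | zero => simp [lengthSum_one]
  | succ n ih => rw [lengthSum_add_two, ih]; ring

lemma tsum_expWeight (s : ℝ) :
    ∑' a : {a : List (ℝ × L) // IsRLString W a}, expWeight s a.1 =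
      Fintype.card L * GW W s * (1 - (Fintype.card L - 1) * GW W s)⁻¹ := by
  rw [tsum_expWeight_eq_tsum_lengthSum, tsum_eq_zero_add' ENNReal.summable, lengthSum_zero,
    zero_add]
  simp only [lengthSum_succ, ENNReal.tsum_mul_left, ENNReal.tsum_geometric]

end RunLength

lemma ENNReal.natCast_mul_mul_inv_one_sub_ne_top_iff {c : ℕ} (hc : 2 ≤ c) (G : ℝ≥0∞) :
    c * G * (1 - (c - 1) * G)⁻¹ ≠ ∞ ↔ (c - 1) * G < 1 := by
  have hc1 : (1 : ℝ≥0∞) ≤ c - 1 := by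
    rw [← Nat.cast_one, ← ENNReal.natCast_sub]
    exact_mod_cast (by omega : 1 ≤ c - 1)
  constructor
  · intro h
    by_contra! hr
    have hG : G ≠ 0 := by rintro rfl; simp at hr
    have hc0 : (c : ℝ≥0∞) ≠ 0 := by exact_mod_cast (by omega : c ≠ 0)
    rw [tsub_eq_zero_of_le hr, ENNReal.inv_zero, ENNReal.mul_top (mul_ne_zero hc0 hG)] at h
    exact h rfl
  · intro hr
    have hG : G < 1 := (le_mul_of_one_le_left' hc1).trans_lt hr
    exact ENNReal.mul_ne_top (ENNReal.mul_ne_top (ENNReal.natCast_ne_top c) hG.ne_top)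
      (ENNReal.inv_ne_top.2 (tsub_pos_of_lt hr).ne')

theorem run_length_summable_iff_general
    {L : Type*} [Fintype L] (hL : 2 ≤ Fintype.card L)
    (W : Set ℝ)
    (s : ℝ) :
    (Summable fun a : {a : List (ℝ × L) // IsRLString W a} =>
        Real.exp (-rlWeight (a : List (ℝ × L)) * s)) ↔
      ((Fintype.card L : ℝ≥0∞) - 1) * GW W s < 1 := by
  rw [summable_iff_tsum_ofReal_ne_top fun _ => Real.exp_nonneg _]
  change (∑' a : {a : List (ℝ × L) // IsRLString W a}, RunLength.expWeight s a.1) ≠ ∞ ↔ _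
  rw [RunLength.tsum_expWeight]
  exact ENNReal.natCast_mul_mul_inv_one_sub_ne_top_iff hL _

/-- The generating function of `⟨W,L⟩` converges at `s` if and only if
`(|L|-1)·G_W(s) < 1`. -/
theorem run_length_summable_iff
    {L : Type*} [Fintype L] (hL : 2 ≤ Fintype.card L)
    (W : Set ℝ) (hWne : W.Nonempty) (hWc : W.Countable) (hWpos : ∀ ν ∈ W, 0 < ν)
    (s : ℝ) :
    (Summable fun a : {a : List (ℝ × L) // IsRLString W a} =>
        Real.exp (-rlWeight (a : List (ℝ × L)) * s)) ↔
      ((Fintype.card L : ℝ≥0∞) - 1) * GW W s < 1 :=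
  run_length_summable_iff_general hL W s
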